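/- arXiv:1803.06123 — 5 statements merged into one kernel-verified Lean document; each statement's English description precedes it below -/
import Mathlib

section
/- Fix a user k (an r-subset of [H]) and an integer g with 2 ≤ g ≤ C(H-1,r-1)+1. The number of (g-1)-subsets W of the user set such that W ⊆ 𝒰_h for some relay h ∈ k equals S₁(g) := Σ_{a=1}^{r} (-1)^{a-1} C(r,a) C(K_a, g-1), where K_a = C(H-a, r-a). -/
open Finset

-- counting r-subsets of univ containing a fixed set t
lemma count_supersets {H : ℕ} (t : Finset (Fin H)) (r : ℕ) (ht : #t ≤ r) :
    #(((univ : Finset (Fin H)).powersetCard r).filter (fun u => t ⊆ u))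
      = Nat.choose (H - #t) (r - #t) := by
  classical
  have : #(((univ : Finset (Fin H)).powersetCard r).filter (fun u => t ⊆ u))
      = #(((univ : Finset (Fin H)) \ t).powersetCard (r - #t)) := by
    apply card_nbij' (fun u => u \ t) (fun v => v ∪ t)
    · intro u hu
      simp only [mem_coe, mem_filter, mem_powersetCard] at hu
      simp only [mem_coe, mem_powersetCard]
      refine ⟨sdiff_subset_sdiff hu.1.1 le_rfl, ?_⟩
      rw [card_sdiff_of_subset hu.2, hu.1.2]
    · intro v hv
      simp only [mem_coe, mem_powersetCard] at hv
      simp only [mem_coe, mem_filter, mem_powersetCard]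
      have hdisj : Disjoint v t := disjoint_of_subset_left hv.1 sdiff_disjoint
      refine ⟨⟨subset_univ _, ?_⟩, subset_union_right⟩
      rw [card_union_of_disjoint hdisj, hv.2]
      omega
    · intro u hu
      simp only [mem_coe, mem_filter, mem_powersetCard] at hu
      beta_reduce
      exact sdiff_union_of_subset hu.2 |>.symm ▸ sdiff_union_of_subset hu.2
    · intro v hv
      simp only [mem_coe, mem_powersetCard] at hv
      have hdisj : Disjoint v t := disjoint_of_subset_left hv.1 sdiff_disjoint
      beta_reduce
      rw [union_sdiff_right, sdiff_eq_self_of_disjoint hdisj]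
  rw [this, card_powersetCard, card_univ_diff]; simp


/-- Fix a user `k` (an `r`-subset of `[H]`) and `2 ≤ g ≤ C(H-1,r-1)+1`. The number of
`(g-1)`-subsets `W` of the user set such that all users of `W` are connected to some common
relay `h ∈ k` equals `S₁(g) = Σ_{a=1}^r (-1)^{a-1} C(r,a) C(K_a, g-1)` with
`K_a = C(H-a,r-a)`. -/
theorem card_S1 (H r g : ℕ) (hr : 1 ≤ r) (hH : r ≤ H)
    (hg2 : 2 ≤ g) (hg : g ≤ Nat.choose (H - 1) (r - 1) + 1)
    (k : Finset (Fin H)) (hk : k ∈ (Finset.univ : Finset (Fin H)).powersetCard r) :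
    (((((Finset.univ : Finset (Fin H)).powersetCard r).powersetCard (g - 1)).filter
        (fun W => ∃ h ∈ k, ∀ u ∈ W, h ∈ u)).card : ℤ)
      = ∑ a ∈ Finset.Icc 1 r, (-1 : ℤ) ^ (a - 1) * (Nat.choose r a)
          * (Nat.choose (Nat.choose (H - a) (r - a)) (g - 1)) := by
  classical
  rw [mem_powersetCard] at hk
  obtain ⟨-, hkcard⟩ := hk
  set U : Finset (Finset (Fin H)) := (univ : Finset (Fin H)).powersetCard r with hU
  set S : Fin H → Finset (Finset (Finset (Fin H))) :=
    fun h => (U.powersetCard (g-1)).filter (fun W => ∀ u ∈ W, h ∈ u) with hS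
  have hunion : (U.powersetCard (g-1)).filter (fun W => ∃ h ∈ k, ∀ u ∈ W, h ∈ u)
      = k.biUnion S := by
    ext W
    simp only [hS, mem_filter, mem_biUnion]
    constructor
    · rintro ⟨hW, h, hh, hall⟩; exact ⟨h, hh, hW, hall⟩
    · rintro ⟨h, hh, hW, hall⟩; exact ⟨hW, h, hh, hall⟩
  have hint : ∀ t, t ⊆ k → ∀ (ht : t.Nonempty),
      (#(t.inf' ht S) : ℤ) = (Nat.choose (Nat.choose (H - #t) (r - #t)) (g-1) : ℤ) := by
    intro t htk ht
    obtain ⟨h0, hh0⟩ := id ht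
    have heq : t.inf' ht S = (U.filter (fun u => t ⊆ u)).powersetCard (g-1) := by
      ext W
      rw [mem_inf']
      simp only [hS, mem_filter, mem_powersetCard]
      constructor
      · intro hall
        refine ⟨fun u hu => mem_filter.2 ⟨(hall h0 hh0).1.1 hu,
          fun h hh => (hall h hh).2 u hu⟩, (hall h0 hh0).1.2⟩
      · rintro ⟨hWf, hc⟩ h hh
        exact ⟨⟨fun u hu => (mem_filter.1 (hWf hu)).1, hc⟩,
          fun u hu => (mem_filter.1 (hWf hu)).2 hh⟩
    rw [heq, card_powersetCard, hU,
      count_supersets t r (le_trans (card_le_card htk) hkcard.le)]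
  rw [hunion, inclusion_exclusion_card_biUnion k S]
  have step1 : (∑ t : k.powerset.filter (·.Nonempty),
        (-1 : ℤ) ^ (#t.1 + 1) * #(t.1.inf' (mem_filter.1 t.2).2 S))
      = ∑ t ∈ k.powerset.filter (·.Nonempty),
        (-1 : ℤ) ^ (#t + 1) * Nat.choose (Nat.choose (H - #t) (r - #t)) (g-1) := by
    rw [← sum_attach (k.powerset.filter (·.Nonempty))
      (fun t => (-1 : ℤ) ^ (#t + 1) * Nat.choose (Nat.choose (H - #t) (r - #t)) (g-1))]
    apply Finset.sum_congr rfl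
    intro t _
    rw [hint t.1 (mem_powerset.1 (mem_filter.1 t.2).1) (mem_filter.1 t.2).2]
  rw [step1]
  have step2 : (∑ t ∈ k.powerset.filter (·.Nonempty),
        (-1 : ℤ) ^ (#t + 1) * Nat.choose (Nat.choose (H - #t) (r - #t)) (g-1))
      = ∑ t ∈ k.powerset, (fun a => if a = 0 then 0 else
          (-1 : ℤ) ^ (a + 1) * Nat.choose (Nat.choose (H - a) (r - a)) (g-1)) #t := by
    rw [sum_filter]
    apply Finset.sum_congr rfl
    intro t _
    beta_reduce
    by_cases h : t.Nonempty
    · rw [if_pos h, if_neg (by simpa [Finset.card_eq_zero, ← Finset.nonempty_iff_ne_empty] using h)]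
    · rw [if_neg h, if_pos (by simpa [Finset.card_eq_zero, Finset.not_nonempty_iff_eq_empty] using h)]
  have hpow := Finset.sum_powerset_apply_card
    (f := fun a => if a = 0 then 0 else
      (-1 : ℤ) ^ (a + 1) * Nat.choose (Nat.choose (H - a) (r - a)) (g-1)) (x := k)
  rw [step2, hpow, hkcard]
  beta_reduce
  rw [← Finset.sum_subset (s₁ := Finset.Icc 1 r) (s₂ := Finset.range (r+1))
    (fun a ha => by simp only [Finset.mem_Icc] at ha; exact Finset.mem_range.2 (by omega))
    (fun a ha hna => by
      simp only [Finset.mem_range, Finset.mem_Icc] at ha hna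
      have : a = 0 := by omega
      simp [this])]
  apply Finset.sum_congr rfl
  intro a ha
  simp only [Finset.mem_Icc] at ha
  rw [if_neg (by omega)]
  obtain ⟨b, rfl⟩ : ∃ b, a = b + 1 := ⟨a - 1, by omega⟩
  rw [nsmul_eq_mul]
  simp only [Nat.add_sub_cancel, pow_succ]
  ring
end

section
/- Fix a user k and an integer g with 2 ≤ g ≤ C(H-1,r-1)+1. The number of (g-1)-subsets W of the user set with k ∈ W and W ⊆ 𝒰_h for some relay h ∈ k equals S₂(g) := Σ_{a=1}^{r} (-1)^{a-1} C(r,a) C(K_a - 1, g-2), where K_a = C(H-a, r-a). -/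
/-!
Let `S_h` be the set of groups `W ∋ k` all of whose users contain the relay `h`; the groups
counted are those in `⋃_{h ∈ k} S_h`. For a nonempty set `A ⊆ k` of `a` relays, `⋂_{h ∈ A} S_h`
consists of the groups formed by `k` and `g - 2` of the other `K_a - 1` users containing `A`,
so it has `C(K_a - 1, g - 2)` elements. Inclusion–exclusion over `A`, grouped by `a = #A`,
gives the alternating sum.
-/

open Finset

namespace Finset

variable {α M : Type*}

theorem sum_powerset_filter_nonempty_apply_card [AddCommMonoid M] (f : ℕ → M) (s : Finset α) :
    ∑ t ∈ s.powerset with t.Nonempty, f #t = ∑ m ∈ Icc 1 #s, (#s).choose m • f m := by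
  have hIcc : Icc 1 #s = {m ∈ range (#s + 1) | 0 < m} := by
    ext m; simp only [mem_Icc, mem_filter, mem_range]; omega
  simp_rw [sum_filter, ← card_pos]
  rw [sum_powerset_apply_card (fun m => if 0 < m then f m else 0), hIcc, sum_filter]
  simp_rw [smul_ite, smul_zero]

theorem card_filter_mem_powersetCard_add_one [DecidableEq α] {s : Finset α} {x : α}
    (hx : x ∈ s) (n : ℕ) : #{W ∈ s.powersetCard (n + 1) | x ∈ W} = (#s - 1).choose n := by
  simpa using card_filter_powersetCard_subset {x} s (n + 1) (singleton_subset_iff.2 hx)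
    (by simp)

end Finset

section Relays

variable {α : Type*} [Fintype α] [DecidableEq α]

def sharedRelayGroups (r n : ℕ) (k A : Finset α) : Finset (Finset (Finset α)) :=
  {W ∈ ((univ : Finset α).powersetCard r).powersetCard n | k ∈ W ∧ ∀ u ∈ W, A ⊆ u}

theorem sharedRelayGroups_eq_filter_powersetCard (r n : ℕ) (k A : Finset α) :
    sharedRelayGroups r n k A
      = {W ∈ {u ∈ (univ : Finset α).powersetCard r | A ⊆ u}.powersetCard n | k ∈ W} := by
  ext W
  simp only [sharedRelayGroups, mem_filter, mem_powersetCard, subset_iff]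
  grind

theorem card_sharedRelayGroups {r n : ℕ} {k A : Finset α} (hk : #k = r) (hA : A ⊆ k) :
    #(sharedRelayGroups r (n + 1) k A)
      = ((Fintype.card α - #A).choose (r - #A) - 1).choose n := by
  have hkA : k ∈ {u ∈ (univ : Finset α).powersetCard r | A ⊆ u} := by simp [hk, hA]
  rw [sharedRelayGroups_eq_filter_powersetCard, card_filter_mem_powersetCard_add_one hkA,
    card_filter_powersetCard_subset A univ r (subset_univ A) (hk ▸ card_le_card hA), card_univ]

theorem inf'_sharedRelayGroups_singleton {r n : ℕ} (k : Finset α) {t : Finset α}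
    (ht : t.Nonempty) :
    t.inf' ht (fun h => sharedRelayGroups r n k {h}) = sharedRelayGroups r n k t := by
  ext W
  simp only [mem_inf', sharedRelayGroups, mem_filter, singleton_subset_iff]
  obtain ⟨h, hh⟩ := ht
  exact ⟨fun hW => ⟨(hW h hh).1, (hW h hh).2.1, fun u hu x hx => (hW x hx).2.2 u hu⟩,
    fun hW x hx => ⟨hW.1, hW.2.1, fun u hu => hW.2.2 u hu hx⟩⟩

theorem filter_exists_relay_eq_biUnion (r n : ℕ) (k : Finset α)
    [DecidablePred fun W : Finset (Finset α) => k ∈ W ∧ ∃ h ∈ k, ∀ u ∈ W, h ∈ u] :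
    {W ∈ ((univ : Finset α).powersetCard r).powersetCard n | k ∈ W ∧ ∃ h ∈ k, ∀ u ∈ W, h ∈ u}
      = k.biUnion (fun h => sharedRelayGroups r n k {h}) := by
  ext W
  simp only [sharedRelayGroups, mem_biUnion, mem_filter, singleton_subset_iff]
  tauto

end Relays

theorem card_S2_general (H r g : ℕ)
    (hg2 : 2 ≤ g)
    (k : Finset (Fin H)) (hk : k ∈ (Finset.univ : Finset (Fin H)).powersetCard r) :
    (((((Finset.univ : Finset (Fin H)).powersetCard r).powersetCard (g - 1)).filter
        (fun W => k ∈ W ∧ ∃ h ∈ k, ∀ u ∈ W, h ∈ u)).card : ℤ)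
      = ∑ a ∈ Finset.Icc 1 r, (-1 : ℤ) ^ (a - 1) * (Nat.choose r a)
          * (Nat.choose (Nat.choose (H - a) (r - a) - 1) (g - 2)) := by
  have hkr : #k = r := (mem_powersetCard.1 hk).2
  obtain ⟨n, hn1, hn2⟩ : ∃ n, g - 1 = n + 1 ∧ g - 2 = n := ⟨g - 2, by omega, rfl⟩
  rw [hn1, hn2, filter_exists_relay_eq_biUnion, inclusion_exclusion_card_biUnion]
  set N : ℕ → ℤ := fun a => (((H - a).choose (r - a) - 1).choose n : ℕ)
  calc ∑ t : {t ∈ k.powerset | t.Nonempty}, (-1 : ℤ) ^ (#t.1 + 1)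
          * #(t.1.inf' (mem_filter.1 t.2).2 fun h => sharedRelayGroups r (n + 1) k {h})
      = ∑ t : {t ∈ k.powerset | t.Nonempty}, (-1 : ℤ) ^ (#t.1 + 1) * N #t.1 := by
        refine Fintype.sum_congr _ _ fun ⟨t, ht⟩ => ?_
        obtain ⟨htk, -⟩ := mem_filter.1 ht
        rw [inf'_sharedRelayGroups_singleton, card_sharedRelayGroups hkr (mem_powerset.1 htk),
          Fintype.card_fin]
    _ = ∑ a ∈ Icc 1 r, r.choose a • ((-1 : ℤ) ^ (a + 1) * N a) := by
        rw [sum_coe_sort _ fun t => (-1 : ℤ) ^ (#t + 1) * N #t,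
          sum_powerset_filter_nonempty_apply_card fun a => (-1 : ℤ) ^ (a + 1) * N a, hkr]
    _ = _ := by
        refine sum_congr rfl fun a ha => ?_
        obtain ⟨b, rfl⟩ : ∃ b, a = b + 1 := ⟨a - 1, by grind⟩
        simp only [N, nsmul_eq_mul, Nat.add_sub_cancel, pow_succ]
        ring

/-- Fix a user `k` and `2 ≤ g ≤ C(H-1,r-1)+1`. The number of `(g-1)`-subsets `W` of the user
set with `k ∈ W` and `W ⊆ 𝒰_h` for some relay `h ∈ k` equals
`S₂(g) = Σ_{a=1}^r (-1)^{a-1} C(r,a) C(K_a - 1, g-2)` with `K_a = C(H-a,r-a)`. -/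
theorem card_S2 (H r g : ℕ) (hr : 1 ≤ r) (hH : r ≤ H)
    (hg2 : 2 ≤ g) (hg : g ≤ Nat.choose (H - 1) (r - 1) + 1)
    (k : Finset (Fin H)) (hk : k ∈ (Finset.univ : Finset (Fin H)).powersetCard r) :
    (((((Finset.univ : Finset (Fin H)).powersetCard r).powersetCard (g - 1)).filter
        (fun W => k ∈ W ∧ ∃ h ∈ k, ∀ u ∈ W, h ∈ u)).card : ℤ)
      = ∑ a ∈ Finset.Icc 1 r, (-1 : ℤ) ^ (a - 1) * (Nat.choose r a)
          * (Nat.choose (Nat.choose (H - a) (r - a) - 1) (g - 2)) :=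
  card_S2_general H r g hg2 k hk
end

section
/- For 2 ≤ g ≤ C(H-1,r-1)+1, the maximum of |R_W| over all W ∈ 𝒵_g equals max{ y ∈ [1,r] : C(H-y, r-y) ≥ g-1 }. -/
open Finset

/-- For `2 ≤ g ≤ C(H-1,r-1)+1`, the maximum of `|R_W|` over all `W ∈ 𝒵_g` (the
`(g-1)`-subsets of users with nonempty common relay set `R_W`) equals
`max{ y ∈ [1,r] : C(H-y,r-y) ≥ g-1 }`. -/
theorem max_common_relays (H r g : ℕ) (hr : 1 ≤ r) (hH : r ≤ H)
    (hg2 : 2 ≤ g) (hg : g ≤ Nat.choose (H - 1) (r - 1) + 1) :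
    (((((Finset.univ : Finset (Fin H)).powersetCard r).powersetCard (g - 1)).filter
        (fun W => ((Finset.univ : Finset (Fin H)).filter
          (fun h => ∀ u ∈ W, h ∈ u)).Nonempty)).sup
      (fun W => ((Finset.univ : Finset (Fin H)).filter (fun h => ∀ u ∈ W, h ∈ u)).card))
    = ((Finset.Icc 1 r).filter
        (fun y => g - 1 ≤ Nat.choose (H - y) (r - y))).sup id := by
  apply le_antisymm
  · apply Finset.sup_le
    intro W hW
    simp only [Finset.mem_filter, Finset.mem_powersetCard] at hW
    obtain ⟨⟨hWsub, hWcard⟩, hWne⟩ := hW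
    set I := (Finset.univ : Finset (Fin H)).filter (fun h => ∀ u ∈ W, h ∈ u) with hIdef
    have hWne' : W.Nonempty := by
      rw [← Finset.card_pos, hWcard]; omega
    obtain ⟨u0, hu0⟩ := hWne'
    have hu0' := hWsub hu0
    rw [Finset.mem_powersetCard] at hu0'
    have hIy : 1 ≤ I.card := Finset.card_pos.mpr hWne
    have hIsubW : ∀ u ∈ W, I ⊆ u := by
      intro u hu h hh
      rw [hIdef, Finset.mem_filter] at hh
      exact hh.2 u hu
    have hIr : I.card ≤ r := hu0'.2 ▸ Finset.card_le_card (hIsubW u0 hu0)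
    have hcount : g - 1 ≤ Nat.choose (H - I.card) (r - I.card) := by
      have hinj : W.card ≤ ((Finset.univ \ I).powersetCard (r - I.card)).card := by
        apply Finset.card_le_card_of_injOn (fun u => u \ I)
        · intro u hu
          have hu' := hWsub hu
          rw [Finset.mem_powersetCard] at hu'
          simp only [Finset.mem_coe, Finset.mem_powersetCard]
          refine ⟨Finset.sdiff_subset_sdiff (Finset.subset_univ _) (Finset.Subset.refl I), ?_⟩
          rw [Finset.card_sdiff_of_subset (hIsubW u hu), hu'.2]
        · intro a ha b hb hab
          simp only at hab
          have hIa := hIsubW a (Finset.mem_coe.mp ha)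
          have hIb := hIsubW b (Finset.mem_coe.mp hb)
          calc a = a \ I ∪ I := (Finset.sdiff_union_of_subset hIa).symm
            _ = b \ I ∪ I := by rw [hab]
            _ = b := Finset.sdiff_union_of_subset hIb
      rw [Finset.card_powersetCard, Finset.card_sdiff_of_subset (Finset.subset_univ I),
        Finset.card_univ, Fintype.card_fin, hWcard] at hinj
      exact hinj
    have hmem : I.card ∈ ((Finset.Icc 1 r).filter
        (fun y => g - 1 ≤ Nat.choose (H - y) (r - y))) := by
      simp only [Finset.mem_filter, Finset.mem_Icc]
      exact ⟨⟨hIy, hIr⟩, hcount⟩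
    exact Finset.le_sup (f := id) hmem
  · apply Finset.sup_le
    intro y hy
    simp only [Finset.mem_filter, Finset.mem_Icc] at hy
    obtain ⟨⟨hy1, hyr⟩, hyc⟩ := hy
    obtain ⟨I, hIsub, hIcard⟩ := Finset.exists_subset_card_eq (s := (Finset.univ : Finset (Fin H))) (n := y)
      (by simp only [Finset.card_univ, Fintype.card_fin]; omega)
    have hdisj : ∀ t : Finset (Fin H), t ⊆ Finset.univ \ I → Disjoint t I := by
      intro t ht
      exact (Finset.subset_sdiff.mp ht).2
    have hcancel : ∀ t : Finset (Fin H), t ⊆ Finset.univ \ I → (t ∪ I) \ I = t := by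
      intro t ht
      rw [Finset.union_sdiff_right, Finset.sdiff_eq_self_of_disjoint (hdisj t ht)]
    set S := ((Finset.univ \ I).powersetCard (r - y)).image (fun t => t ∪ I) with hSdef
    have hScard : S.card = Nat.choose (H - y) (r - y) := by
      rw [hSdef, Finset.card_image_of_injOn, Finset.card_powersetCard,
        Finset.card_sdiff_of_subset (Finset.subset_univ I), Finset.card_univ, Fintype.card_fin, hIcard]
      intro a ha b hb hab
      rw [Finset.mem_coe, Finset.mem_powersetCard] at ha hb
      simp only at hab
      calc a = (a ∪ I) \ I := (hcancel a ha.1).symm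
        _ = (b ∪ I) \ I := by rw [hab]
        _ = b := hcancel b hb.1
    have hSsub : S ⊆ (Finset.univ : Finset (Fin H)).powersetCard r := by
      intro u hu
      rw [hSdef, Finset.mem_image] at hu
      obtain ⟨t, ht, rfl⟩ := hu
      rw [Finset.mem_powersetCard] at ht ⊢
      refine ⟨Finset.subset_univ _, ?_⟩
      rw [Finset.card_union_of_disjoint (hdisj t ht.1), ht.2, hIcard]
      omega
    obtain ⟨W, hWS, hWcard⟩ := Finset.exists_subset_card_eq (s := S) (n := g - 1) (by omega)
    have hImem : ∀ h ∈ I, ∀ u ∈ W, h ∈ u := by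
      intro h hh u hu
      have := hWS hu
      rw [hSdef, Finset.mem_image] at this
      obtain ⟨t, ht, rfl⟩ := this
      exact Finset.mem_union_right t hh
    have hWmem : W ∈ (((((Finset.univ : Finset (Fin H)).powersetCard r).powersetCard (g - 1)).filter
        (fun W => ((Finset.univ : Finset (Fin H)).filter
          (fun h => ∀ u ∈ W, h ∈ u)).Nonempty))) := by
      rw [Finset.mem_filter, Finset.mem_powersetCard]
      refine ⟨⟨hWS.trans hSsub, hWcard⟩, ?_⟩
      have hIne : I.Nonempty := by rw [← Finset.card_pos, hIcard]; omega
      obtain ⟨h0, hh0⟩ := hIne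
      exact ⟨h0, Finset.mem_filter.mpr ⟨Finset.mem_univ _, hImem h0 hh0⟩⟩
    have hyle : y ≤ ((Finset.univ : Finset (Fin H)).filter (fun h => ∀ u ∈ W, h ∈ u)).card := by
      rw [← hIcard]
      apply Finset.card_le_card
      intro h hh
      exact Finset.mem_filter.mpr ⟨Finset.mem_univ _, hImem h hh⟩
    exact le_trans hyle (Finset.le_sup (f := fun W => ((Finset.univ : Finset (Fin H)).filter (fun h => ∀ u ∈ W, h ∈ u)).card) hWmem)
end

section
/- Fix a user k and an integer g with 2 ≤ g ≤ C(H-1,r-1)+1. Then Σ_{W ∈ 𝒵_g, k ∈ W} |R_W| = r · C(C(H-1,r-1) - 1, g-2). -/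
open Finset
lemma aux_card {α : Type*} [DecidableEq α] (s : Finset α) (a : α) (ha : a ∈ s) (n : ℕ) :
    ((s.powersetCard (n+1)).filter (fun t => a ∈ t)).card = (s.card - 1).choose n := by
  rw [← Finset.card_erase_of_mem ha, ← Finset.card_powersetCard]
  apply Finset.card_nbij' (fun t => t.erase a) (fun t => insert a t)
  · intro t ht
    have ht : t ∈ (s.powersetCard (n+1)).filter (fun t => a ∈ t) := ht
    simp only [Finset.mem_filter, Finset.mem_powersetCard] at *
    obtain ⟨⟨hsub, hc⟩, hat⟩ := ht
    rw [Finset.mem_coe, Finset.mem_powersetCard]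
    constructor
    · intro x hx
      exact Finset.mem_erase.mpr ⟨(Finset.mem_erase.mp hx).1, hsub (Finset.mem_erase.mp hx).2⟩
    · rw [Finset.card_erase_of_mem hat, hc]; rfl
  · intro t ht
    have ht : t ∈ (s.erase a).powersetCard n := ht
    simp only [Finset.mem_filter, Finset.mem_powersetCard] at *
    obtain ⟨hsub, hc⟩ := ht
    have hat : a ∉ t := fun h => (Finset.mem_erase.mp (hsub h)).1 rfl
    rw [Finset.mem_coe, Finset.mem_filter, Finset.mem_powersetCard]
    refine ⟨⟨?_, ?_⟩, Finset.mem_insert_self a t⟩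
    · intro x hx
      rcases Finset.mem_insert.mp hx with h | h
      · exact h ▸ ha
      · exact (Finset.mem_erase.mp (hsub h)).2
    · rw [Finset.card_insert_of_notMem hat, hc]
  · intro t ht
    have ht : t ∈ (s.powersetCard (n+1)).filter (fun t => a ∈ t) := ht
    simp only [Finset.mem_filter] at ht
    exact Finset.insert_erase ht.2
  · intro t ht
    have ht : t ∈ (s.erase a).powersetCard n := ht
    simp only [Finset.mem_powersetCard] at ht
    have hat : a ∉ t := fun h => (Finset.mem_erase.mp (ht.1 h)).1 rfl
    exact Finset.erase_insert hat

/-- Fix a user `k` and `2 ≤ g ≤ C(H-1,r-1)+1`. Then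
`Σ_{W ∈ 𝒵_g, k ∈ W} |R_W| = r · C(C(H-1,r-1) - 1, g-2)`. -/
theorem sum_common_relays_through_user (H r g : ℕ) (hr : 1 ≤ r) (hH : r ≤ H)
    (hg2 : 2 ≤ g) (hg : g ≤ Nat.choose (H - 1) (r - 1) + 1)
    (k : Finset (Fin H)) (hk : k ∈ (Finset.univ : Finset (Fin H)).powersetCard r) :
    (∑ W ∈ ((((Finset.univ : Finset (Fin H)).powersetCard r).powersetCard (g - 1)).filter
        (fun W => k ∈ W ∧ ((Finset.univ : Finset (Fin H)).filter
          (fun h => ∀ u ∈ W, h ∈ u)).Nonempty)),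
      ((Finset.univ : Finset (Fin H)).filter (fun h => ∀ u ∈ W, h ∈ u)).card)
    = r * Nat.choose (Nat.choose (H - 1) (r - 1) - 1) (g - 2) := by
  set K := Nat.choose (H - 1) (r - 1) with hK
  set S := (((Finset.univ : Finset (Fin H)).powersetCard r).powersetCard (g - 1)) with hS
  -- step 1: drop the nonempty condition
  have step1 : (∑ W ∈ S.filter (fun W => k ∈ W ∧ ((Finset.univ : Finset (Fin H)).filter
          (fun h => ∀ u ∈ W, h ∈ u)).Nonempty),
      ((Finset.univ : Finset (Fin H)).filter (fun h => ∀ u ∈ W, h ∈ u)).card)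
      = ∑ W ∈ S.filter (fun W => k ∈ W),
      ((Finset.univ : Finset (Fin H)).filter (fun h => ∀ u ∈ W, h ∈ u)).card := by
    rw [Finset.sum_filter, Finset.sum_filter]
    refine Finset.sum_congr rfl fun W _ => ?_
    by_cases hkW : k ∈ W
    · by_cases hne : ((Finset.univ : Finset (Fin H)).filter (fun h => ∀ u ∈ W, h ∈ u)).Nonempty
      · simp [hkW, hne]
      · simp [hkW, hne, Finset.card_eq_zero.mpr (Finset.not_nonempty_iff_eq_empty.mp hne)]
    · simp [hkW]
  rw [step1]
  -- step 2: swap sums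
  have step2 : (∑ W ∈ S.filter (fun W => k ∈ W),
      ((Finset.univ : Finset (Fin H)).filter (fun h => ∀ u ∈ W, h ∈ u)).card)
      = ∑ h : Fin H, ((S.filter (fun W => k ∈ W)).filter (fun W => ∀ u ∈ W, h ∈ u)).card := by
    simp only [Finset.card_filter]
    exact Finset.sum_comm
  rw [step2]
  -- step 3: evaluate each inner count
  have hkr : k.card = r := (Finset.mem_powersetCard.mp hk).2
  have step3 : ∀ h : Fin H, ((S.filter (fun W => k ∈ W)).filter (fun W => ∀ u ∈ W, h ∈ u)).card
      = if h ∈ k then (K - 1).choose (g - 2) else 0 := by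
    intro h
    by_cases hhk : h ∈ k
    · simp only [hhk, if_true]
      set U := ((Finset.univ : Finset (Fin H)).powersetCard r).filter (fun u => h ∈ u) with hU
      have hUcard : U.card = K := by
        have : r = (r - 1) + 1 := (Nat.succ_pred_eq_of_pos hr).symm
        rw [hU, this, aux_card _ _ (Finset.mem_univ h)]
        simp [hK]
      have hset : (S.filter (fun W => k ∈ W)).filter (fun W => ∀ u ∈ W, h ∈ u)
          = (U.powersetCard (g - 1)).filter (fun W => k ∈ W) := by
        ext W
        simp only [Finset.mem_filter, Finset.mem_powersetCard, hS, hU]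
        constructor
        · rintro ⟨⟨⟨hsub, hc⟩, hkW⟩, hall⟩
          exact ⟨⟨fun u hu => Finset.mem_filter.mpr ⟨hsub hu, hall u hu⟩, hc⟩, hkW⟩
        · rintro ⟨⟨hsub, hc⟩, hkW⟩
          exact ⟨⟨⟨fun u hu => (Finset.mem_filter.mp (hsub hu)).1, hc⟩, hkW⟩,
            fun u hu => (Finset.mem_filter.mp (hsub hu)).2⟩
      rw [hset]
      have hkU : k ∈ U := Finset.mem_filter.mpr ⟨hk, hhk⟩
      have hg1 : g - 1 = (g - 2) + 1 := by omega
      rw [hg1, aux_card U k hkU, hUcard]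
    · simp only [hhk, if_false, Finset.card_eq_zero]
      rw [Finset.filter_eq_empty_iff]
      rintro W hW hall
      exact hhk (hall k (Finset.mem_filter.mp hW).2)
  simp only [step3]
  rw [Finset.sum_ite_mem]
  simp [hkr, mul_comm]
end

section
/- Let H ≥ r ≥ 1, g ≥ 2, and suppose g - 1 ≤ C(H-1,r-1). Define y* = max{y ∈ [1,r] : C(H-y, r-y) ≥ g-1} and M_relay = N·C(K₁, g-1)/(y*·S₁(g)) with K₁ = C(H-1,r-1). Then for every W ∈ 𝒵_g, |R_W|·M_relay/(N·C(K₁,g-1)) ≤ 1/S₁(g); i.e., the |R_W| relay-cached pieces of each MDS symbol of size 1/S₁(g) fit without overlap. -/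
open Finset

/-- Number of `r`-subsets of `Fin H` containing a fixed set `A` of size `≤ r`. -/
private lemma card_supersets (H r : ℕ) (A : Finset (Fin H)) (hA : A.card ≤ r) :
    (((Finset.univ : Finset (Fin H)).powersetCard r).filter (fun u => A ⊆ u)).card
      = Nat.choose (H - A.card) (r - A.card) := by
  classical
  have key : (((Finset.univ : Finset (Fin H)).powersetCard r).filter (fun u => A ⊆ u)).card
      = (Aᶜ.powersetCard (r - A.card)).card := by
    apply Finset.card_bij' (fun u _ => u \ A) (fun v _ => v ∪ A)
    · intro u hu
      simp only [mem_filter, mem_powersetCard_univ] at hu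
      rw [mem_powersetCard]
      constructor
      · intro x hx
        simp only [mem_sdiff] at hx
        simp [hx.2]
      · rw [card_sdiff_of_subset hu.2, hu.1]
    · intro v hv
      rw [mem_powersetCard] at hv
      have hd : Disjoint v A := by
        rw [Finset.disjoint_left]
        intro x hx hxA
        have := hv.1 hx
        simp [hxA] at this
      simp only [mem_filter, mem_powersetCard_univ]
      constructor
      · rw [card_union_of_disjoint hd, hv.2]
        omega
      · exact subset_union_right
    · intro u hu
      simp only [mem_filter, mem_powersetCard_univ] at hu
      exact sdiff_union_of_subset hu.2
    · intro v hv
      rw [mem_powersetCard] at hv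
      have hd : Disjoint v A := by
        rw [Finset.disjoint_left]
        intro x hx hxA
        have := hv.1 hx
        simp [hxA] at this
      rw [union_sdiff_distrib, sdiff_self]
      simp [Finset.sdiff_eq_self_iff_disjoint.2 hd]
  rw [key, card_powersetCard, card_compl, Fintype.card_fin]

/-- Alternating sum of signs over nonempty subsets. -/
private lemma sum_signs {α : Type*} [DecidableEq α] (S : Finset α) :
    ∑ A ∈ S.powerset.filter (·.Nonempty), (-1 : ℚ) ^ (A.card - 1)
      = if S.Nonempty then 1 else 0 := by
  classical
  by_cases hS : S.Nonempty
  · rw [if_pos hS]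
    have h0 : (∑ m ∈ S.powerset, (-1 : ℚ) ^ m.card) = 0 := by
      have := Finset.sum_powerset_neg_one_pow_card_of_nonempty (x := S) hS
      have : ((∑ m ∈ S.powerset, (-1 : ℤ) ^ m.card : ℤ) : ℚ) = 0 := by rw [this]; norm_num
      push_cast at this
      exact this
    have hsplit := Finset.sum_filter_add_sum_filter_not S.powerset (·.Nonempty)
      (fun A => (-1 : ℚ) ^ A.card)
    have hne : S.powerset.filter (fun A => ¬ A.Nonempty) = {∅} := by
      ext A
      simp [Finset.not_nonempty_iff_eq_empty]
      rintro rfl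
      exact empty_subset S
    rw [hne, h0] at hsplit
    simp only [sum_singleton, card_empty, pow_zero] at hsplit
    have hkey : ∑ A ∈ S.powerset.filter (·.Nonempty), (-1 : ℚ) ^ (A.card - 1)
        = - ∑ A ∈ S.powerset.filter (·.Nonempty), (-1 : ℚ) ^ A.card := by
      rw [← Finset.sum_neg_distrib]
      apply Finset.sum_congr rfl
      intro A hA
      simp only [mem_filter] at hA
      obtain ⟨c, hc⟩ : ∃ c, A.card = c + 1 := ⟨A.card - 1, by
        have := Finset.card_pos.2 hA.2; omega⟩
      rw [hc]
      simp [pow_succ]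
    rw [hkey]
    linarith [hsplit]
  · rw [if_neg hS]
    have : S = ∅ := Finset.not_nonempty_iff_eq_empty.1 hS
    subst this
    rw [Finset.powerset_empty, Finset.filter_singleton]
    simp

private lemma subset_filter' {α : Type*} {s t : Finset α} {p : α → Prop} [DecidablePred p] :
    s ⊆ t.filter p ↔ s ⊆ t ∧ ∀ x ∈ s, p x := by
  constructor
  · intro h
    exact ⟨fun x hx => (Finset.mem_filter.1 (h hx)).1,
           fun x hx => (Finset.mem_filter.1 (h hx)).2⟩
  · rintro ⟨h1, h2⟩ x hx
    exact Finset.mem_filter.2 ⟨h1 hx, h2 x hx⟩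

private lemma S1_pos (H r g : ℕ) (hr : 1 ≤ r) (hH : r ≤ H) (hg2 : 2 ≤ g)
    (hg : g - 1 ≤ Nat.choose (H - 1) (r - 1)) :
    0 < ∑ a ∈ Finset.Icc 1 r, (-1 : ℚ) ^ (a - 1) * (Nat.choose r a)
        * (Nat.choose (Nat.choose (H - a) (r - a)) (g - 1)) := by
  classical
  obtain ⟨u₀, hu₀sub, hu₀⟩ := Finset.exists_subset_card_eq
    (show r ≤ (Finset.univ : Finset (Fin H)).card by simpa using hH)
  set 𝒰 := (Finset.univ : Finset (Fin H)).powersetCard r with h𝒰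
  set F : Finset (Fin H) → Finset (Finset (Fin H)) :=
    fun A => 𝒰.filter (fun u => A ⊆ u) with hF
  set T : Finset (Fin H) → ℕ := fun A => ((F A).powersetCard (g - 1)).card with hT
  have hcardF : ∀ A : Finset (Fin H), A.card ≤ r →
      (F A).card = Nat.choose (H - A.card) (r - A.card) := fun A hA =>
    card_supersets H r A hA
  -- T as an indicator sum over W
  have hTW : ∀ A : Finset (Fin H), (T A : ℚ) = ∑ W ∈ 𝒰.powersetCard (g-1),
      (if ∀ u ∈ W, A ⊆ u then (1:ℚ) else 0) := by
    intro A
    have hset : (F A).powersetCard (g-1)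
        = (𝒰.powersetCard (g-1)).filter (fun W => ∀ u ∈ W, A ⊆ u) := by
      ext W
      simp only [mem_powersetCard, mem_filter, hF, subset_filter']
      tauto
    have hTcard : T A = ((𝒰.powersetCard (g-1)).filter (fun W => ∀ u ∈ W, A ⊆ u)).card :=
      congrArg Finset.card hset
    rw [hTcard, Finset.card_filter]
    push_cast
    rfl
  -- Step 1: the sum equals a sum over nonempty subsets of u₀
  set f : ℕ → ℚ := fun a =>
    (-1 : ℚ) ^ (a - 1) * (Nat.choose (Nat.choose (H - a) (r - a)) (g - 1)) with hf
  have hTA : ∀ A ∈ u₀.powerset, (-1:ℚ)^(A.card-1) * (T A : ℚ) = f A.card := by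
    intro A hA
    have hAr : A.card ≤ r := by
      rw [← hu₀]; exact Finset.card_le_card (Finset.mem_powerset.1 hA)
    rw [hT]
    simp only
    rw [Finset.card_powersetCard, hcardF A hAr, hf]
  have step1 : (∑ a ∈ Finset.Icc 1 r, (-1 : ℚ) ^ (a - 1) * (Nat.choose r a)
        * (Nat.choose (Nat.choose (H - a) (r - a)) (g - 1)))
      = ∑ A ∈ u₀.powerset.filter (·.Nonempty), (-1:ℚ)^(A.card-1) * (T A : ℚ) := by
    have hsplit := Finset.sum_filter_add_sum_filter_not u₀.powerset (·.Nonempty)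
      (fun A => (-1:ℚ)^(A.card-1) * (T A : ℚ))
    have hne : u₀.powerset.filter (fun A => ¬ A.Nonempty) = {∅} := by
      ext A
      simp [Finset.not_nonempty_iff_eq_empty]
      rintro rfl
      exact Finset.empty_subset u₀
    rw [hne, Finset.sum_singleton] at hsplit
    have hwhole : ∑ A ∈ u₀.powerset, (-1:ℚ)^(A.card-1) * (T A : ℚ)
        = ∑ m ∈ Finset.range (r + 1), (r.choose m) • f m := by
      rw [Finset.sum_congr rfl hTA, Finset.sum_powerset_apply_card, hu₀]
    have hrange : Finset.range (r + 1) = insert 0 (Finset.Icc 1 r) := by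
      ext x; simp [Finset.mem_Icc, Finset.mem_range]; omega
    have h0notin : 0 ∉ Finset.Icc 1 r := by simp
    rw [hrange, Finset.sum_insert h0notin] at hwhole
    have hzero : (r.choose 0) • f 0 = (-1:ℚ)^((∅ : Finset (Fin H)).card-1) * (T ∅ : ℚ) := by
      rw [hTA ∅ (by simp)]
      simp
    rw [hzero] at hwhole
    have : ∑ A ∈ u₀.powerset.filter (·.Nonempty), (-1:ℚ)^(A.card-1) * (T A : ℚ)
        = ∑ m ∈ Finset.Icc 1 r, (r.choose m) • f m := by linarith [hsplit, hwhole]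
    rw [this]
    apply Finset.sum_congr rfl
    intro a _
    rw [nsmul_eq_mul, hf]
    ring
  -- Step 2: swap sums to get indicator count
  have step2 : ∑ A ∈ u₀.powerset.filter (·.Nonempty), (-1:ℚ)^(A.card-1) * (T A : ℚ)
      = ∑ W ∈ 𝒰.powersetCard (g-1),
          (if (u₀.filter (fun h => ∀ u ∈ W, h ∈ u)).Nonempty then (1:ℚ) else 0) := by
    simp only [hTW, Finset.mul_sum]
    rw [Finset.sum_comm]
    apply Finset.sum_congr rfl
    intro W _
    have hswap : ∀ A : Finset (Fin H),
        (-1:ℚ)^(A.card-1) * (if ∀ u ∈ W, A ⊆ u then (1:ℚ) else 0)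
        = (if ∀ u ∈ W, A ⊆ u then ((-1:ℚ)^(A.card-1)) else 0) := by
      intro A
      by_cases h : ∀ u ∈ W, A ⊆ u <;> simp [h]
    simp only [hswap]
    rw [← Finset.sum_filter]
    have hSW : (u₀.powerset.filter (·.Nonempty)).filter (fun A => ∀ u ∈ W, A ⊆ u)
        = (u₀.filter (fun h => ∀ u ∈ W, h ∈ u)).powerset.filter (·.Nonempty) := by
      ext A
      simp only [Finset.mem_filter, Finset.mem_powerset, subset_filter']
      constructor
      · rintro ⟨⟨hsub, hne⟩, hall⟩
        exact ⟨⟨hsub, fun x hx u hu => hall u hu hx⟩, hne⟩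
      · rintro ⟨⟨hsub, hall⟩, hne⟩
        exact ⟨⟨hsub, hne⟩, fun u hu x hx => hall x hx u hu⟩
    rw [hSW, sum_signs]
  rw [step1, step2]
  -- Step 3: positivity via a witness
  obtain ⟨h0, hh0⟩ := Finset.card_pos.1 (by rw [hu₀]; exact hr)
  have hF1card : (F {h0}).card = Nat.choose (H - 1) (r - 1) := by
    rw [hcardF {h0} (by simpa using hr)]
    simp
  obtain ⟨W₀, hW₀⟩ := Finset.powersetCard_nonempty.2
    (show g - 1 ≤ (F {h0}).card by rw [hF1card]; exact hg)
  rw [Finset.mem_powersetCard] at hW₀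
  have hW₀mem : W₀ ∈ 𝒰.powersetCard (g-1) := by
    rw [Finset.mem_powersetCard]
    exact ⟨hW₀.1.trans (Finset.filter_subset _ _), hW₀.2⟩
  have hind : (if (u₀.filter (fun h => ∀ u ∈ W₀, h ∈ u)).Nonempty then (1:ℚ) else 0) = 1 := by
    rw [if_pos]
    refine ⟨h0, Finset.mem_filter.2 ⟨hh0, fun u hu => ?_⟩⟩
    have := hW₀.1 hu
    rw [hF, Finset.mem_filter] at this
    simpa using this.2
  calc (0:ℚ) < 1 := one_pos
    _ = _ := hind.symm
    _ ≤ _ := Finset.single_le_sum (f := fun W =>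
        (if (u₀.filter (fun h => ∀ u ∈ W, h ∈ u)).Nonempty then (1:ℚ) else 0))
        (fun W _ => by positivity) hW₀mem

/-- Let `H ≥ r ≥ 1`, `g ≥ 2`, `g - 1 ≤ C(H-1,r-1)`. With
`y* = max{y ∈ [1,r] : C(H-y,r-y) ≥ g-1}`, `K₁ = C(H-1,r-1)`,
`S₁(g) = Σ_{a=1}^r (-1)^{a-1} C(r,a) C(C(H-a,r-a), g-1)` and
`M_relay = N·C(K₁,g-1)/(y*·S₁(g))`, every `W ∈ 𝒵_g` satisfies
`|R_W|·M_relay/(N·C(K₁,g-1)) ≤ 1/S₁(g)`: the relay-cached pieces of each MDS symbol fit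
without overlap. -/
theorem relay_pieces_fit (H r g : ℕ) (hr : 1 ≤ r) (hH : r ≤ H)
    (hg2 : 2 ≤ g) (hg : g - 1 ≤ Nat.choose (H - 1) (r - 1))
    (N : ℚ) (hN : 0 < N)
    (ystar : ℕ)
    (hy : ystar = ((Finset.Icc 1 r).filter
      (fun y => g - 1 ≤ Nat.choose (H - y) (r - y))).sup id)
    (S1 : ℚ)
    (hS1 : S1 = ∑ a ∈ Finset.Icc 1 r, (-1 : ℚ) ^ (a - 1) * (Nat.choose r a)
        * (Nat.choose (Nat.choose (H - a) (r - a)) (g - 1)))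
    (Mrelay : ℚ)
    (hM : Mrelay = N * (Nat.choose (Nat.choose (H - 1) (r - 1)) (g - 1)) / (ystar * S1)) :
    ∀ W ∈ ((((Finset.univ : Finset (Fin H)).powersetCard r).powersetCard (g - 1)).filter
        (fun W => ((Finset.univ : Finset (Fin H)).filter
          (fun h => ∀ u ∈ W, h ∈ u)).Nonempty)),
      (((Finset.univ : Finset (Fin H)).filter (fun h => ∀ u ∈ W, h ∈ u)).card : ℚ)
          * Mrelay / (N * (Nat.choose (Nat.choose (H - 1) (r - 1)) (g - 1)))
        ≤ 1 / S1 := by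
  classical
  intro W hW
  rw [Finset.mem_filter] at hW
  obtain ⟨hWmem, hWne⟩ := hW
  rw [Finset.mem_powersetCard] at hWmem
  set R := (Finset.univ : Finset (Fin H)).filter (fun h => ∀ u ∈ W, h ∈ u) with hRdef
  have hWneW : W.Nonempty := by
    rw [← Finset.card_pos, hWmem.2]; omega
  obtain ⟨u, hu⟩ := hWneW
  have huU := hWmem.1 hu
  rw [Finset.mem_powersetCard_univ] at huU
  have hRu : R ⊆ u := fun x hx => (Finset.mem_filter.1 hx).2 u hu
  have hcr : R.card ≤ r := huU ▸ Finset.card_le_card hRu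
  have hc1 : 1 ≤ R.card := Finset.card_pos.2 hWne
  have hWF : W ⊆ ((Finset.univ : Finset (Fin H)).powersetCard r).filter (fun v => R ⊆ v) := by
    intro v hv
    exact Finset.mem_filter.2 ⟨hWmem.1 hv, fun x hx => (Finset.mem_filter.1 hx).2 v hv⟩
  have hgc : g - 1 ≤ Nat.choose (H - R.card) (r - R.card) := by
    rw [← card_supersets H r R hcr, ← hWmem.2]
    exact Finset.card_le_card hWF
  have hcy : R.card ≤ ystar := by
    rw [hy]
    exact Finset.le_sup (f := id)
      (Finset.mem_filter.2 ⟨Finset.mem_Icc.2 ⟨hc1, hcr⟩, hgc⟩)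
  have hy1 : 1 ≤ ystar := by
    rw [hy]
    refine Finset.le_sup (f := id) (Finset.mem_filter.2 ⟨Finset.mem_Icc.2 ⟨le_refl 1, hr⟩, ?_⟩)
    simpa using hg
  have hS1pos : 0 < S1 := hS1 ▸ S1_pos H r g hr hH hg2 hg
  have hC : (0:ℚ) < (Nat.choose (Nat.choose (H - 1) (r - 1)) (g - 1) : ℚ) := by
    exact_mod_cast Nat.choose_pos hg
  have hyQ : (0:ℚ) < (ystar : ℚ) := by exact_mod_cast hy1
  rw [hM]
  have hsimp : (R.card : ℚ) * (N * (Nat.choose (Nat.choose (H - 1) (r - 1)) (g - 1))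
        / (ystar * S1)) / (N * (Nat.choose (Nat.choose (H - 1) (r - 1)) (g - 1)))
      = (R.card : ℚ) / (ystar * S1) := by
    field_simp
  rw [hsimp, div_le_div_iff₀ (by positivity) hS1pos]
  have hcyQ : (R.card : ℚ) ≤ (ystar : ℚ) := by exact_mod_cast hcy
  nlinarith [hS1pos.le]
end
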